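/- arXiv:1810.08841 — 11 statements merged into one kernel-verified Lean document; each statement's English description precedes it below -/
import Mathlib

section
/- Let Q ⊆ ℝ^n be a nonempty closed convex set with Q ⊆ {p : p ≥ 0}, and let p* ∈ Q minimize the Euclidean norm over Q. Then for every q ∈ Q, ⟨p*, 1 − q⟩ ≤ n/4, where 1 is the all-ones vector. -/
open scoped RealInnerProductSpace


/-- If `Q ⊆ ℝ^n` is a nonempty closed convex set contained in the nonnegative
orthant and `p*` minimizes the Euclidean norm over `Q`, then
`⟨p*, 1 - q⟩ ≤ n/4` for every `q ∈ Q`. -/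
theorem min_norm_point_one_minus_bound (n : ℕ) (Q : Set (EuclideanSpace ℝ (Fin n)))
    (hne : Q.Nonempty) (hclosed : IsClosed Q) (hconv : Convex ℝ Q)
    (hnonneg : ∀ q ∈ Q, ∀ i, 0 ≤ q i)
    (pstar : EuclideanSpace ℝ (Fin n)) (hps : pstar ∈ Q)
    (hmin : ∀ q ∈ Q, ‖pstar‖ ≤ ‖q‖) :
    ∀ q ∈ Q, ∑ i, pstar i * (1 - q i) ≤ (n : ℝ) / 4 := by
  haveI : Nonempty Q := hne.to_subtype
  have hinf : ‖(0 : EuclideanSpace ℝ (Fin n)) - pstar‖ = ⨅ w : Q, ‖(0 : EuclideanSpace ℝ (Fin n)) - w‖ := by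
    apply le_antisymm
    · exact le_ciInf fun w => by
        simpa [norm_neg] using hmin w w.2
    · exact ciInf_le ⟨0, fun x ⟨w, hw⟩ => hw ▸ norm_nonneg _⟩ (⟨pstar, hps⟩ : Q)
  have key : ∀ q ∈ Q, (0:ℝ) ≤ ⟪pstar, q - pstar⟫ := by
    intro q hq
    have h := (norm_eq_iInf_iff_real_inner_le_zero hconv hps).mp hinf q hq
    have : -⟪pstar, q - pstar⟫ ≤ 0 := by
      simpa [zero_sub, inner_neg_left] using h
    linarith
  intro q hq
  have h1 : ⟪pstar, pstar⟫ ≤ ⟪pstar, q⟫ := by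
    have := key q hq
    rw [inner_sub_right] at this
    linarith
  have h2 : (∑ i, pstar i * pstar i) ≤ ∑ i, pstar i * q i := by
    simp only [PiLp.inner_apply, RCLike.inner_apply, conj_trivial] at h1
    simpa [mul_comm] using h1
  have h3 : ∑ i, pstar i * (1 - q i) ≤ ∑ i, (pstar i - pstar i * pstar i) := by
    have : ∑ i, pstar i * (1 - q i) = (∑ i, pstar i) - ∑ i, pstar i * q i := by
      rw [← Finset.sum_sub_distrib]; congr 1; ext i; ring
    rw [this, Finset.sum_sub_distrib]
    linarith
  calc ∑ i, pstar i * (1 - q i) ≤ ∑ i, (pstar i - pstar i * pstar i) := h3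
    _ ≤ ∑ _i : Fin n, (1/4 : ℝ) := by
        apply Finset.sum_le_sum
        intro i _
        nlinarith [sq_nonneg (pstar i - 1/2)]
    _ = (n : ℝ) / 4 := by simp; ring
end

section
/- For every simple game (N, v) with n players, there exists a payoff vector p ∈ ℝ^n with p ≥ 0 and p(W) ≥ 1 for every winning coalition W, such that p(L) ≤ n/4 for every losing coalition L. Consequently the critical threshold value α = min_{p ≥ 0} max_{W winning, L losing} p(L)/p(W) satisfies α ≤ n/4. -/
open Finset

/-- Quadratic minimization over the standard simplex: there is a point `lam` of
the simplex such that, writing `ℓ i = ∑ j, lam j * e j i`, for every vertex `k`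
the first-order optimality condition
`∑ i, (1 - ℓ i) * e k i ≤ ∑ i, (1 - ℓ i) * ℓ i` holds. -/
lemma quad_min_aux {ι κ : Type*} [Fintype ι] [Fintype κ] [DecidableEq κ] [Nonempty κ]
    (e : κ → ι → ℝ) :
    ∃ lam : κ → ℝ, (∀ j, 0 ≤ lam j) ∧ (∑ j, lam j = 1) ∧
      ∀ k : κ, ∑ i, (1 - ∑ j, lam j * e j i) * e k i
        ≤ ∑ i, (1 - ∑ j, lam j * e j i) * (∑ j, lam j * e j i) := by
  classical
  set Φ : (κ → ℝ) → ℝ := fun lam => ∑ i, (1 - ∑ j, lam j * e j i) ^ 2 with hΦ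
  have hc : Continuous Φ := by
    apply continuous_finset_sum
    intro i _
    exact (continuous_const.sub
      (continuous_finset_sum _ fun j _ => (continuous_apply j).mul continuous_const)).pow 2
  have hδmem : ∀ k : κ, (fun j => if j = k then (1:ℝ) else 0) ∈ stdSimplex ℝ κ := by
    intro k
    refine ⟨fun j => ?_, ?_⟩
    · by_cases hj : j = k <;> simp [hj]
    · rw [Finset.sum_ite_eq' Finset.univ k (fun _ => (1:ℝ))]
      simp
  have hne : (stdSimplex ℝ κ).Nonempty := ⟨_, hδmem (Classical.arbitrary κ)⟩
  obtain ⟨lam, hmem, hmin⟩ := (isCompact_stdSimplex ℝ κ).exists_isMinOn hne hc.continuousOn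
  refine ⟨lam, hmem.1, hmem.2, ?_⟩
  intro k
  set ℓ : ι → ℝ := fun i => ∑ j, lam j * e j i with hℓ
  set c : ℝ := ∑ i, (1 - ℓ i) * (e k i - ℓ i) with hcdef
  set B : ℝ := ∑ i, (e k i - ℓ i) ^ 2 with hBdef
  have key : ∀ t : ℝ, 0 ≤ t → t ≤ 1 → 0 ≤ -2*t*c + t^2*B := by
    intro t ht0 ht1
    have hmem2 : (1-t) • lam + t • (fun j => if j = k then (1:ℝ) else 0) ∈ stdSimplex ℝ κ :=
      convex_stdSimplex ℝ κ hmem (hδmem k) (by linarith) ht0 (by ring)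
    have h := isMinOn_iff.mp hmin _ hmem2
    have hexp : Φ ((1-t) • lam + t • (fun j => if j = k then (1:ℝ) else 0))
        = Φ lam - 2*t*c + t^2*B := by
      simp only [hΦ, hcdef, hBdef]
      rw [Finset.mul_sum, Finset.mul_sum, ← Finset.sum_sub_distrib, ← Finset.sum_add_distrib]
      apply Finset.sum_congr rfl
      intro i _
      have hval : ∑ j, ((1-t) • lam + t • (fun j => if j = k then (1:ℝ) else 0)) j * e j i
          = (1-t) * ℓ i + t * e k i := by
        have : ∀ j, ((1-t) • lam + t • (fun j => if j = k then (1:ℝ) else 0)) j * e j i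
            = (1-t) * (lam j * e j i) + t * (if j = k then e j i else 0) := by
          intro j
          simp only [Pi.add_apply, Pi.smul_apply, smul_eq_mul]
          split <;> ring
        rw [Finset.sum_congr rfl fun j _ => this j, Finset.sum_add_distrib,
          ← Finset.mul_sum, ← Finset.mul_sum,
          Finset.sum_ite_eq' Finset.univ k (fun j => e j i), if_pos (Finset.mem_univ k)]
      rw [hval]
      ring
    rw [hexp] at h
    linarith
  have hc0 : c ≤ 0 := by
    by_contra hpos
    push_neg at hpos
    have hBnn : 0 ≤ B := Finset.sum_nonneg fun i _ => sq_nonneg _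
    set t := min 1 (c / (B+1)) with htdef
    have ht0 : 0 < t := lt_min one_pos (div_pos hpos (by linarith))
    have h := key t ht0.le (min_le_left _ _)
    have h2 : 2*c ≤ t*B := by nlinarith
    have h3 : t*B ≤ c/(B+1)*B := mul_le_mul_of_nonneg_right (min_le_right _ _) hBnn
    have h4 : c/(B+1)*B < c := by
      rw [div_mul_eq_mul_div, div_lt_iff₀ (by linarith)]
      nlinarith
    linarith
  have hsplit : ∑ i, (1 - ℓ i) * e k i - ∑ i, (1 - ℓ i) * ℓ i = c := by
    rw [hcdef, ← Finset.sum_sub_distrib]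
    apply Finset.sum_congr rfl
    intro i _
    ring
  linarith

/-- For every simple game with `n` players there is a nonnegative payoff vector
giving at least `1` to every winning coalition and at most `n/4` to every losing
coalition; hence the critical threshold value satisfies `α ≤ n/4`. -/
theorem alpha_le_n_div_four (n : ℕ) (v : Finset (Fin n) → ℕ)
    (hv01 : ∀ S, v S = 0 ∨ v S = 1)
    (hmono : ∀ S T : Finset (Fin n), S ⊆ T → v S ≤ v T)
    (hempty : v ∅ = 0) (hfull : v Finset.univ = 1) :
    ∃ p : Fin n → ℝ, (∀ i, 0 ≤ p i) ∧
      (∀ W : Finset (Fin n), v W = 1 → 1 ≤ ∑ i ∈ W, p i) ∧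
      (∀ L : Finset (Fin n), v L = 0 → ∑ i ∈ L, p i ≤ (n : ℝ) / 4) := by
  classical
  -- the type of losing coalitions
  haveI : Nonempty {S : Finset (Fin n) // v S = 0} := ⟨⟨∅, hempty⟩⟩
  obtain ⟨lam, hlam0, hlam1, hkey⟩ :=
    quad_min_aux (ι := Fin n) (κ := {S : Finset (Fin n) // v S = 0})
      (fun S i => if i ∈ S.1 then (1:ℝ) else 0)
  set e : {S : Finset (Fin n) // v S = 0} → Fin n → ℝ :=
    fun S i => if i ∈ S.1 then (1:ℝ) else 0 with he
  set ℓ : Fin n → ℝ := fun i => ∑ j, lam j * e j i with hℓ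
  have hℓ0 : ∀ i, 0 ≤ ℓ i := by
    intro i
    apply Finset.sum_nonneg
    intro j _
    apply mul_nonneg (hlam0 j)
    simp only [he]; split <;> norm_num
  have hℓ1 : ∀ i, ℓ i ≤ 1 := by
    intro i
    calc ℓ i ≤ ∑ j, lam j := by
          apply Finset.sum_le_sum
          intro j _
          have : e j i ≤ 1 := by simp only [he]; split <;> norm_num
          nlinarith [hlam0 j]
      _ = 1 := hlam1
  refine ⟨fun i => 1 - ℓ i, ?_, ?_, ?_⟩
  · intro i
    simp only
    linarith [hℓ1 i]
  · -- winning coalitions get at least 1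
    intro W hW
    have hterm : ∀ j : {S : Finset (Fin n) // v S = 0},
        ∑ i ∈ W, (1 - e j i) = ((W \ j.1).card : ℝ) := by
      intro j
      have : ∀ i ∈ W, (1 - e j i) = (if i ∈ W \ j.1 then (1:ℝ) else 0) := by
        intro i hi
        simp only [he, Finset.mem_sdiff, hi, true_and]
        split <;> simp_all
      rw [Finset.sum_congr rfl this, Finset.sum_boole]
      congr 1
      rw [Finset.filter_mem_eq_inter, Finset.inter_eq_right.mpr Finset.sdiff_subset]
    have hswap : ∑ i ∈ W, (1 - ℓ i) = ∑ j, lam j * ((W \ j.1).card : ℝ) := by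
      have h1 : ∀ i, (1 - ℓ i) = ∑ j, lam j * (1 - e j i) := by
        intro i
        rw [Finset.sum_congr rfl (fun j _ => mul_one_sub (lam j) (e j i)),
          Finset.sum_sub_distrib, hlam1]
      rw [Finset.sum_congr rfl fun i _ => h1 i, Finset.sum_comm]
      apply Finset.sum_congr rfl
      intro j _
      rw [← Finset.mul_sum, hterm j]
    rw [hswap]
    calc (1:ℝ) = ∑ j, lam j := hlam1.symm
      _ ≤ ∑ j, lam j * ((W \ j.1).card : ℝ) := by
          apply Finset.sum_le_sum
          intro j _
          have hsub : ¬ W ⊆ j.1 := by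
            intro hsub
            have := hmono W j.1 hsub
            rw [hW, j.2] at this
            omega
          have hcard : 1 ≤ ((W \ j.1).card : ℝ) := by
            have h1 : 0 < (W \ j.1).card :=
              Finset.card_pos.mpr (Finset.sdiff_nonempty.mpr hsub)
            exact_mod_cast h1
          nlinarith [hlam0 j]
  · -- losing coalitions get at most n/4
    intro L hL
    have h := hkey ⟨L, hL⟩
    have hLsum : ∑ i ∈ L, (1 - ℓ i) = ∑ i, (1 - ℓ i) * e ⟨L, hL⟩ i := by
      rw [← Finset.sum_filter_add_sum_filter_not Finset.univ (fun i => i ∈ L)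
        (fun i => (1 - ℓ i) * e ⟨L, hL⟩ i)]
      have hA : ∑ i ∈ Finset.univ.filter (fun i => i ∈ L), (1 - ℓ i) * e ⟨L, hL⟩ i
          = ∑ i ∈ L, (1 - ℓ i) := by
        rw [Finset.filter_mem_eq_inter, Finset.univ_inter]
        apply Finset.sum_congr rfl
        intro i hi
        simp [he, hi]
      have hB : ∑ i ∈ Finset.univ.filter (fun i => ¬ i ∈ L), (1 - ℓ i) * e ⟨L, hL⟩ i = 0 := by
        apply Finset.sum_eq_zero
        intro i hi
        simp only [Finset.mem_filter] at hi
        simp [he, hi.2]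
      rw [hA, hB, add_zero]
    rw [hLsum]
    calc ∑ i, (1 - ℓ i) * e ⟨L, hL⟩ i ≤ ∑ i, (1 - ℓ i) * ℓ i := h
      _ ≤ ∑ _i : Fin n, (1/4 : ℝ) := by
          apply Finset.sum_le_sum
          intro i _
          nlinarith [sq_nonneg (ℓ i - 1/2), hℓ0 i, hℓ1 i]
      _ = (n : ℝ) / 4 := by
          rw [Finset.sum_const, Finset.card_univ, Fintype.card_fin, nsmul_eq_mul]
          ring
end

section
/- Strengthened form of the n/4 bound: for every simple game with n players and winning-coalition polyhedron Q(𝒲) = { p ∈ ℝ^n : p ≥ 0, p(W) ≥ 1 for all W ∈ 𝒲 }, we have min_{p ∈ Q(𝒲)} max_{q ∈ Q(𝒲)} ⟨p, 1 − q⟩ ≤ n/4. In particular, if p* is the minimum-norm point of Q(𝒲), then ⟨p*, 1 − q⟩ ≤ n/4 for all q ∈ Q(𝒲). -/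
/-- Strengthened `n/4` bound: if `p*` is the minimum-norm point of the
winning-coalition polyhedron `Q(𝒲)`, then `⟨p*, 1 - q⟩ ≤ n/4` for every
`q ∈ Q(𝒲)`; in particular `min_{p ∈ Q(𝒲)} max_{q ∈ Q(𝒲)} ⟨p, 1-q⟩ ≤ n/4`. -/
theorem strengthened_n_div_four (n : ℕ) (𝒲 : Finset (Fin n) → Prop)
    (hne : ∃ W, 𝒲 W) (hup : ∀ W T : Finset (Fin n), 𝒲 W → W ⊆ T → 𝒲 T)
    (hfull : 𝒲 Finset.univ)
    (Q : Set (EuclideanSpace ℝ (Fin n)))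
    (hQ : Q = {p : EuclideanSpace ℝ (Fin n) |
        (∀ i, 0 ≤ p i) ∧ ∀ W : Finset (Fin n), 𝒲 W → 1 ≤ ∑ i ∈ W, p i})
    (pstar : EuclideanSpace ℝ (Fin n)) (hps : pstar ∈ Q)
    (hmin : ∀ q ∈ Q, ‖pstar‖ ≤ ‖q‖) :
    ∀ q ∈ Q, ∑ i, pstar i * (1 - q i) ≤ (n : ℝ) / 4 := by
  -- Q is convex
  have hconv : Convex ℝ Q := by
    subst hQ
    intro p hp q hq a b ha hb hab
    constructor
    · intro i
      have : (a • p + b • q) i = a * p i + b * q i := rfl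
      rw [this]
      have := hp.1 i; have := hq.1 i
      positivity
    · intro W hW
      have hsum : ∀ i ∈ W, (a • p + b • q) i = a * p i + b * q i := fun i _ => rfl
      rw [Finset.sum_congr rfl hsum, Finset.sum_add_distrib, ← Finset.mul_sum, ← Finset.mul_sum]
      have h1 := hp.2 W hW
      have h2 := hq.2 W hW
      nlinarith
  -- pstar attains the infimum of ‖0 - w‖ over Q
  have hinf : ‖(0 : EuclideanSpace ℝ (Fin n)) - pstar‖ = ⨅ w : Q, ‖(0 : EuclideanSpace ℝ (Fin n)) - w‖ := by
    haveI : Nonempty Q := ⟨⟨pstar, hps⟩⟩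
    apply le_antisymm
    · apply le_ciInf
      intro w
      simp only [zero_sub, norm_neg]
      exact hmin w w.2
    · exact ciInf_le ⟨0, fun x ⟨w, hw⟩ => hw ▸ norm_nonneg _⟩ (⟨pstar, hps⟩ : Q)
  have hvar := (norm_eq_iInf_iff_real_inner_le_zero hconv hps).mp hinf
  -- main argument
  intro q hq
  have hinner : (∑ i, pstar i * (q i - pstar i)) ≥ 0 := by
    have : (inner ℝ ((0 : EuclideanSpace ℝ (Fin n)) - pstar) (q - pstar) : ℝ)
        = -∑ i, pstar i * (q i - pstar i) := by
      simp only [zero_sub, inner_neg_left, PiLp.inner_apply, RCLike.inner_apply',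
        conj_trivial, PiLp.sub_apply]
    linarith [hvar q hq, this ▸ hvar q hq]
  have hterm : ∀ i : Fin n, pstar i - (pstar i)^2 ≤ 1/4 := by
    intro i; nlinarith [sq_nonneg (pstar i - 1/2)]
  calc ∑ i, pstar i * (1 - q i)
      = ∑ i, (pstar i - (pstar i)^2) - ∑ i, pstar i * (q i - pstar i) := by
        rw [← Finset.sum_sub_distrib]; apply Finset.sum_congr rfl; intro i _; ring
    _ ≤ ∑ i, (pstar i - (pstar i)^2) := by linarith
    _ ≤ ∑ _i : Fin n, (1/4 : ℝ) := Finset.sum_le_sum fun i _ => hterm i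
    _ = (n : ℝ) / 4 := by simp [Finset.sum_const]; ring
end

section
/- If (1/2)·1 lies in the convex hull of the characteristic vectors of losing coalitions and (2/n)·1 lies in the convex hull of the characteristic vectors of winning coalitions of a simple game with n players, then for every p ∈ ℝ^n with p ≥ 0 and p(W) ≥ 1 for all winning W, there is a losing coalition L with p(L) ≥ n/4; thus α = n/4. -/
/-- If `(1/2)·1` is in the convex hull of characteristic vectors of losing
coalitions and `(2/n)·1` is in the convex hull of characteristic vectors of
winning coalitions, then every feasible payoff has a losing coalition of value
at least `n/4` (so `α = n/4`). -/
theorem alpha_eq_n_div_four_of_hulls (n : ℕ) (hn : 0 < n) (v : Finset (Fin n) → ℕ)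
    (hv01 : ∀ S, v S = 0 ∨ v S = 1)
    (hmono : ∀ S T : Finset (Fin n), S ⊆ T → v S ≤ v T)
    (hempty : v ∅ = 0) (hfull : v Finset.univ = 1)
    (hLhull : (fun _ : Fin n => (1 : ℝ) / 2) ∈
      convexHull ℝ {x : Fin n → ℝ |
        ∃ L : Finset (Fin n), v L = 0 ∧ x = fun i => if i ∈ L then 1 else 0})
    (hWhull : (fun _ : Fin n => (2 : ℝ) / n) ∈
      convexHull ℝ {x : Fin n → ℝ |
        ∃ W : Finset (Fin n), v W = 1 ∧ x = fun i => if i ∈ W then 1 else 0}) :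
    ∀ p : Fin n → ℝ, (∀ i, 0 ≤ p i) →
      (∀ W : Finset (Fin n), v W = 1 → 1 ≤ ∑ i ∈ W, p i) →
      ∃ L : Finset (Fin n), v L = 0 ∧ (n : ℝ) / 4 ≤ ∑ i ∈ L, p i := by
  intro p hp hW
  have hn' : (0:ℝ) < n := by exact_mod_cast hn
  have hlin : IsLinearMap ℝ (fun x : Fin n → ℝ => ∑ i, p i * x i) := by
    constructor
    · intro x y; simp [mul_add, Finset.sum_add_distrib]
    · intro c x; simp [Finset.mul_sum, mul_left_comm]
  have hdot : ∀ (S : Finset (Fin n)),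
      (∑ i, p i * (if i ∈ S then (1:ℝ) else 0)) = ∑ i ∈ S, p i := by
    intro S
    simp [mul_ite, Finset.sum_ite_mem]
  have h1 : (1:ℝ) ≤ ∑ i, p i * ((2:ℝ)/n) := by
    have hsub : {x : Fin n → ℝ |
        ∃ W : Finset (Fin n), v W = 1 ∧ x = fun i => if i ∈ W then 1 else 0} ⊆
        {x | 1 ≤ ∑ i, p i * x i} := by
      rintro x ⟨W, hW1, rfl⟩
      simp only [Set.mem_setOf_eq, hdot]
      exact hW W hW1
    exact convexHull_min hsub (convex_halfSpace_ge hlin 1) hWhull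
  have hsum : (n:ℝ)/2 ≤ ∑ i, p i := by
    rw [← Finset.sum_mul] at h1
    rw [mul_div_assoc', le_div_iff₀ hn'] at h1
    linarith
  by_contra hcon
  push_neg at hcon
  have hsub : {x : Fin n → ℝ |
      ∃ L : Finset (Fin n), v L = 0 ∧ x = fun i => if i ∈ L then 1 else 0} ⊆
      {x | ∑ i, p i * x i < (n:ℝ)/4} := by
    rintro x ⟨L, hL0, rfl⟩
    simp only [Set.mem_setOf_eq, hdot]
    exact hcon L hL0
  have h2 := convexHull_min hsub (convex_halfSpace_lt hlin _) hLhull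
  simp only [Set.mem_setOf_eq, ← Finset.sum_mul] at h2
  nlinarith [h2]
end

section
/- For the cycle simple game on an even number n ≥ 4 of players, where the minimal winning coalitions are the pairs {1,2}, {2,3}, …, {n−1,n}, {n,1}, the critical threshold value equals exactly n/4. -/
lemma fin_val_add_one' {n : ℕ} [NeZero n] (hn : 2 ≤ n) (a : Fin n) :
    ((a + 1 : Fin n)).val = (a.val + 1) % n := by
  have h1 : ((1 : Fin n)).val = 1 := by
    rw [Fin.val_one']
    exact Nat.mod_eq_of_lt hn
  rw [Fin.add_def, h1]

/-- For the cycle simple game on an even number `n ≥ 4` of players, where a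
coalition is winning iff it contains two cyclically consecutive players, the
critical threshold value `α = min_p max_L p(L)` equals exactly `n/4`. -/
theorem cycle_game_alpha_eq (n : ℕ) [NeZero n] (hn4 : 4 ≤ n) (hneven : Even n) :
    (∃ p : Fin n → ℝ, (∀ i, 0 ≤ p i) ∧
        (∀ W : Finset (Fin n), (∃ i : Fin n, i ∈ W ∧ i + 1 ∈ W) → 1 ≤ ∑ i ∈ W, p i) ∧
        (∀ L : Finset (Fin n), (¬ ∃ i : Fin n, i ∈ L ∧ i + 1 ∈ L) →
          ∑ i ∈ L, p i ≤ (n : ℝ) / 4)) ∧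
    (∀ p : Fin n → ℝ, (∀ i, 0 ≤ p i) →
        (∀ W : Finset (Fin n), (∃ i : Fin n, i ∈ W ∧ i + 1 ∈ W) → 1 ≤ ∑ i ∈ W, p i) →
        ∃ L : Finset (Fin n), (¬ ∃ i : Fin n, i ∈ L ∧ i + 1 ∈ L) ∧
          (n : ℝ) / 4 ≤ ∑ i ∈ L, p i) := by
  obtain ⟨m, hm⟩ := hneven
  have hn2 : 2 ≤ n := by omega
  have hkey : ∀ a b : Fin n, b.val = a.val + 1 → b = a + 1 := by
    intro a b h
    apply Fin.ext
    rw [fin_val_add_one' hn2, Nat.mod_eq_of_lt (h ▸ b.isLt), h]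
  have hne' : ∀ i : Fin n, i ≠ i + 1 := by
    intro i h
    have := congrArg Fin.val h
    rw [fin_val_add_one' hn2] at this
    have hlt := i.isLt
    rcases Nat.lt_or_ge (i.val + 1) n with h' | h'
    · rw [Nat.mod_eq_of_lt h'] at this; omega
    · have he : i.val + 1 = n := by omega
      rw [he, Nat.mod_self] at this; omega
  constructor
  · refine ⟨fun _ => 1/2, fun i => by norm_num, ?_, ?_⟩
    · rintro W ⟨i, hi, hi1⟩
      have hsub : ({i, i+1} : Finset (Fin n)) ⊆ W := by
        intro x hx
        simp only [Finset.mem_insert, Finset.mem_singleton] at hx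
        rcases hx with rfl | rfl <;> assumption
      calc (1:ℝ) = ∑ _j ∈ ({i, i+1} : Finset (Fin n)), (1/2 : ℝ) := by
            rw [Finset.sum_pair (hne' i)]; norm_num
        _ ≤ ∑ _j ∈ W, (1/2 : ℝ) :=
            Finset.sum_le_sum_of_subset_of_nonneg hsub (by intros; norm_num)
    · intro L hL
      push_neg at hL
      have hcard : 2 * L.card ≤ n := by
        have hIcard : L.card ≤ (Finset.univ : Finset (Fin (n/2))).card := by
          apply Finset.card_le_card_of_injOn
            (fun i => (⟨i.val / 2, by have := i.isLt; omega⟩ : Fin (n/2)))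
          · intro _ _; exact Finset.mem_coe.2 (Finset.mem_univ _)
          · intro a ha b hb hab
            simp only [Fin.mk.injEq] at hab
            by_contra hne
            have hv : a.val ≠ b.val := fun h => hne (Fin.ext h)
            have hc : b.val = a.val + 1 ∨ a.val = b.val + 1 := by omega
            rcases hc with h | h
            · exact hL a ha (hkey a b h ▸ hb)
            · exact hL b hb (hkey b a h ▸ ha)
        simp only [Finset.card_univ, Fintype.card_fin] at hIcard
        omega
      rw [Finset.sum_const, nsmul_eq_mul]
      have hc : (2 * L.card : ℝ) ≤ (n : ℝ) := by exact_mod_cast hcard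
      push_cast at hc ⊢
      linarith
  · intro p hpos hW
    have hpair : ∀ i : Fin n, 1 ≤ p i + p (i + 1) := by
      intro i
      have := hW {i, i+1} ⟨i, by simp, by simp⟩
      rwa [Finset.sum_pair (hne' i)] at this
    have hsum2 : (n : ℝ) ≤ 2 * ∑ i, p i := by
      have h1 : (n:ℝ) ≤ ∑ i : Fin n, (p i + p (i+1)) := by
        calc (n:ℝ) = ∑ _i : Fin n, (1:ℝ) := by simp
          _ ≤ _ := Finset.sum_le_sum (fun i _ => hpair i)
      have h2 : ∑ i : Fin n, p (i+1) = ∑ i, p i :=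
        Fintype.sum_equiv (Equiv.addRight (1 : Fin n)) _ _ (fun i => rfl)
      rw [Finset.sum_add_distrib, h2] at h1
      linarith
    set E := Finset.univ.filter (fun i : Fin n => i.val % 2 = 0) with hE
    set O := Finset.univ.filter (fun i : Fin n => ¬ i.val % 2 = 0) with hO
    have hsplit : ∑ i ∈ E, p i + ∑ i ∈ O, p i = ∑ i, p i :=
      Finset.sum_filter_add_sum_filter_not _ _ _
    have hElose : ¬ ∃ i : Fin n, i ∈ E ∧ i + 1 ∈ E := by
      rintro ⟨i, hi, hi1⟩
      simp only [hE, Finset.mem_filter, Finset.mem_univ, true_and] at hi hi1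
      rw [fin_val_add_one' hn2] at hi1
      have hlt := i.isLt
      rcases Nat.lt_or_ge (i.val + 1) n with h | h
      · rw [Nat.mod_eq_of_lt h] at hi1; omega
      · have he : i.val + 1 = n := by omega
        clear hi1; omega
    have hOlose : ¬ ∃ i : Fin n, i ∈ O ∧ i + 1 ∈ O := by
      rintro ⟨i, hi, hi1⟩
      simp only [hO, Finset.mem_filter, Finset.mem_univ, true_and] at hi hi1
      rw [fin_val_add_one' hn2] at hi1
      have hlt := i.isLt
      rcases Nat.lt_or_ge (i.val + 1) n with h | h
      · rw [Nat.mod_eq_of_lt h] at hi1; omega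
      · have he : i.val + 1 = n := by omega
        rw [he, Nat.mod_self] at hi1; omega
    rcases le_or_gt ((n:ℝ)/4) (∑ i ∈ E, p i) with h | h
    · exact ⟨E, hElose, h⟩
    · exact ⟨O, hOlose, by linarith⟩
end

section
/- In a complete simple game with players ordered 1 ⪰ 2 ⪰ … ⪰ n, let k be the largest index such that {k,…,n} is winning, and for i ≤ k let s_i be the smallest size of a winning coalition contained in {i,…,n}. Then for every losing coalition L and every i ≤ k, |L ∩ {1,…,i}| ≤ s_i − 1. -/
lemma cg_swap_aux (n : ℕ) (v : Finset (Fin n) → ℕ)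
    (hv01 : ∀ S, v S = 0 ∨ v S = 1)
    (hcomplete : ∀ i j : Fin n, i ≤ j → ∀ S : Finset (Fin n), i ∉ S → j ∉ S →
      v (insert j S) ≤ v (insert i S))
    (A : Finset (Fin n)) :
    ∀ m : ℕ, ∀ B : Finset (Fin n), (B \ A).card = m → v B = 1 → A.card = B.card →
      (∀ a ∈ A \ B, ∀ b ∈ B \ A, a ≤ b) → v A = 1 := by
  intro m
  induction m using Nat.strong_induction_on with
  | _ m ih =>
    intro B hm hB hcard hle
    rcases Nat.eq_zero_or_pos m with h0 | hpos
    · have hBA : B ⊆ A := by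
        rw [h0] at hm
        exact (Finset.sdiff_eq_empty_iff_subset).1 (Finset.card_eq_zero.mp hm)
      have hAB := Finset.eq_of_subset_of_card_le hBA hcard.le
      rw [← hAB]; exact hB
    · have hBAne : (B \ A).Nonempty := Finset.card_pos.mp (hm ▸ hpos)
      have hABcard : (A \ B).card = (B \ A).card := Finset.card_sdiff_comm hcard
      have hABne : (A \ B).Nonempty := by
        apply Finset.card_pos.mp; rw [hABcard, hm]; exact hpos
      obtain ⟨a, ha⟩ := hABne
      obtain ⟨b, hb⟩ := hBAne
      have haA := (Finset.mem_sdiff.mp ha).1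
      have haB := (Finset.mem_sdiff.mp ha).2
      have hbB := (Finset.mem_sdiff.mp hb).1
      have hbA := (Finset.mem_sdiff.mp hb).2
      have hab : a ≤ b := hle a ha b hb
      set B' := insert a (B.erase b) with hB'def
      have h1 : v (insert b (B.erase b)) ≤ v B' :=
        hcomplete a b hab (B.erase b)
          (fun h => haB (Finset.mem_of_mem_erase h)) (Finset.notMem_erase b B)
      rw [Finset.insert_erase hbB] at h1
      have hvB' : v B' = 1 := by
        rcases hv01 B' with h | h
        · omega
        · exact h
      have haNB' : a ∉ B.erase b := fun h => haB (Finset.mem_of_mem_erase h)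
      have hcard' : A.card = B'.card := by
        rw [hB'def, Finset.card_insert_of_notMem haNB',
          Finset.card_erase_of_mem hbB]
        have : 1 ≤ B.card := Finset.card_pos.mpr ⟨b, hbB⟩
        omega
      have hsub : B' \ A ⊆ (B \ A).erase b := by
        intro x hx
        have hxB' := (Finset.mem_sdiff.mp hx).1
        have hxA := (Finset.mem_sdiff.mp hx).2
        rcases Finset.mem_insert.mp hxB' with h | h
        · exact absurd (h ▸ haA) hxA
        · exact Finset.mem_erase.mpr ⟨(Finset.mem_erase.mp h).1,
            Finset.mem_sdiff.mpr ⟨Finset.mem_of_mem_erase h, hxA⟩⟩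
      have hlt : (B' \ A).card < m := by
        calc (B' \ A).card ≤ ((B \ A).erase b).card := Finset.card_le_card hsub
          _ < (B \ A).card := Finset.card_erase_lt_of_mem hb
          _ = m := hm
      have hle' : ∀ a' ∈ A \ B', ∀ b' ∈ B' \ A, a' ≤ b' := by
        intro a' ha' b' hb'
        have ha'A := (Finset.mem_sdiff.mp ha').1
        have ha'B' := (Finset.mem_sdiff.mp ha').2
        have hb'B' := (Finset.mem_sdiff.mp hb').1
        have hb'A := (Finset.mem_sdiff.mp hb').2
        have ha'B : a' ∉ B := by
          intro h
          have hne : a' ≠ b := fun he => hbA (he ▸ ha'A)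
          exact ha'B' (Finset.mem_insert_of_mem (Finset.mem_erase.mpr ⟨hne, h⟩))
        have hb'B : b' ∈ B \ A := by
          rcases Finset.mem_insert.mp hb'B' with h | h
          · exact absurd (h ▸ haA) hb'A
          · exact Finset.mem_sdiff.mpr ⟨Finset.mem_of_mem_erase h, hb'A⟩
        exact hle a' (Finset.mem_sdiff.mpr ⟨ha'A, ha'B⟩) b' hb'B
      exact ih (B' \ A).card hlt B' rfl hvB' hcard' hle'

/-- In a complete simple game with players ordered `1 ⪰ 2 ⪰ … ⪰ n`, if `k` is
the largest index whose tail `{k,…,n}` is winning and `s i` is the smallest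
size of a winning coalition contained in `{i,…,n}` (for `i ≤ k`), then every
losing coalition `L` satisfies `|L ∩ {1,…,i}| ≤ s i - 1` for all `i ≤ k`. -/
theorem complete_game_losing_prefix_bound (n : ℕ) (v : Finset (Fin n) → ℕ)
    (hv01 : ∀ S, v S = 0 ∨ v S = 1)
    (hmono : ∀ S T : Finset (Fin n), S ⊆ T → v S ≤ v T)
    (hempty : v ∅ = 0) (hfull : v Finset.univ = 1)
    (hcomplete : ∀ i j : Fin n, i ≤ j → ∀ S : Finset (Fin n), i ∉ S → j ∉ S →
      v (insert j S) ≤ v (insert i S))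
    (k : Fin n)
    (hk : v (Finset.univ.filter fun j => k ≤ j) = 1)
    (hkmax : ∀ k' : Fin n, v (Finset.univ.filter fun j => k' ≤ j) = 1 → k' ≤ k)
    (s : Fin n → ℕ)
    (hs : ∀ i : Fin n, i ≤ k →
      IsLeast {m : ℕ | ∃ W : Finset (Fin n),
        W ⊆ Finset.univ.filter (fun j => i ≤ j) ∧ v W = 1 ∧ W.card = m} (s i)) :
    ∀ L : Finset (Fin n), v L = 0 → ∀ i : Fin n, i ≤ k →
      (L ∩ Finset.univ.filter fun j => j ≤ i).card ≤ s i - 1 := by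
  intro L hL i hi
  by_contra hcon
  push_neg at hcon
  obtain ⟨⟨W, hWsub, hWv, hWcard⟩, _⟩ := hs i hi
  have hs1 : 1 ≤ s i := by
    by_contra h
    push_neg at h
    interval_cases h' : s i
    · rw [Finset.card_eq_zero.mp hWcard] at hWv
      omega
  have hc : s i ≤ (L ∩ Finset.univ.filter fun j => j ≤ i).card := by omega
  obtain ⟨A, hA, hAcard⟩ := Finset.exists_subset_card_eq hc
  have hvA : v A = 1 := by
    apply cg_swap_aux n v hv01 hcomplete A (W \ A).card W rfl hWv (by rw [hAcard, hWcard])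
    intro a ha b hb
    have haA := (Finset.mem_sdiff.mp ha).1
    have hai : a ≤ i := by
      have := hA haA
      simpa using (Finset.mem_inter.mp this).2
    have hib : i ≤ b := by
      have := hWsub (Finset.mem_sdiff.mp hb).1
      simpa using this
    exact hai.trans hib
  have hAL : A ⊆ L := hA.trans Finset.inter_subset_left
  have := hmono A L hAL
  omega
end

section
/- For every complete simple game with n players, the critical threshold value satisfies α ≤ √n · ln n. -/
open Finset

namespace CompleteGameAux

variable {n : ℕ} (v : Finset (Fin n) → ℕ)

/-- One-step shift: replacing a member `x` of a winning coalition by a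
stronger (smaller-index) outsider `y` keeps the coalition winning. -/
lemma step (hv01 : ∀ S, v S = 0 ∨ v S = 1)
    (hcomplete : ∀ i j : Fin n, i ≤ j → ∀ S : Finset (Fin n), i ∉ S → j ∉ S →
      v (insert j S) ≤ v (insert i S))
    {W : Finset (Fin n)} {x y : Fin n}
    (hW : v W = 1) (hx : x ∈ W) (hy : y ∉ W) (hyx : y ≤ x) :
    v (insert y (W.erase x)) = 1 := by
  have h1 := hcomplete y x hyx (W.erase x)
    (fun h => hy (mem_of_mem_erase h)) (notMem_erase x W)
  rw [insert_erase hx] at h1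
  rcases hv01 (insert y (W.erase x)) with h | h
  · omega
  · exact h

/-- Domination lemma: if `W` wins and there's an injection from `W` into `S`
sending each player to a stronger-or-equal player, then `S` wins. -/
lemma dom (hv01 : ∀ S, v S = 0 ∨ v S = 1)
    (hmono : ∀ S T : Finset (Fin n), S ⊆ T → v S ≤ v T)
    (hcomplete : ∀ i j : Fin n, i ≤ j → ∀ S : Finset (Fin n), i ∉ S → j ∉ S →
      v (insert j S) ≤ v (insert i S)) :
    ∀ (N : ℕ) (W S : Finset (Fin n)) (f : Fin n → Fin n),
      (∑ x ∈ W, (x : ℕ)) ≤ N → v W = 1 → Set.InjOn f W →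
      (∀ x ∈ W, f x ∈ S) → (∀ x ∈ W, f x ≤ x) → v S = 1 := by
  intro N
  induction N using Nat.strong_induction_on with
  | _ N IH =>
    intro W S f hsum hW hinj hmem hle
    by_cases hfix : ∀ x ∈ W, f x = x
    · have hsub : W ⊆ S := fun x hx => by
        have := hmem x hx; rwa [hfix x hx] at this
      have := hmono W S hsub
      rcases hv01 S with h | h
      · omega
      · exact h
    · push_neg at hfix
      obtain ⟨x₀, hx₀W, hx₀⟩ := hfix
      have hWbne : (W.filter (fun x => f x < x)).Nonempty :=
        ⟨x₀, mem_filter.2 ⟨hx₀W, lt_of_le_of_ne (hle x₀ hx₀W) hx₀⟩⟩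
      set x := (W.filter (fun x => f x < x)).min' hWbne with hxdef
      have hxmem := (W.filter (fun x => f x < x)).min'_mem hWbne
      rw [mem_filter] at hxmem
      obtain ⟨hxW, hfx⟩ := hxmem
      have hminfix : ∀ w ∈ W, w < x → f w = w := by
        intro w hw hwx
        by_contra hne
        have hwb : w ∈ W.filter (fun x => f x < x) :=
          mem_filter.2 ⟨hw, lt_of_le_of_ne (hle w hw) hne⟩
        exact absurd ((W.filter (fun x => f x < x)).min'_le w hwb) (not_le.2 hwx)
      -- f x ∈ W is impossible
      have hfxnW : f x ∉ W := by
        intro hfxW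
        have h1 : f (f x) = f x := hminfix (f x) hfxW hfx
        have h2 : f x = x := hinj hfxW hxW h1
        exact absurd h2 (ne_of_lt hfx)
      -- replace x by f x
      have hW' : v (insert (f x) (W.erase x)) = 1 :=
        step v hv01 hcomplete hW hxW hfxnW (le_of_lt hfx)
      have hynerase : f x ∉ W.erase x := fun h => hfxnW (mem_of_mem_erase h)
      have hsum' : (∑ z ∈ insert (f x) (W.erase x), (z : ℕ)) < N := by
        rw [sum_insert hynerase]
        have e1 : (∑ z ∈ W.erase x, (z : ℕ)) + (x : ℕ) = ∑ z ∈ W, (z : ℕ) :=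
          sum_erase_add W _ hxW
        have e2 : (f x : ℕ) < (x : ℕ) := hfx
        omega
      refine IH _ hsum' (insert (f x) (W.erase x)) S
        (fun z => if z = f x then f x else f z) le_rfl hW' ?_ ?_ ?_
      · -- injectivity
        intro a ha b hb hab
        have hab' : (if a = f x then f x else f a) = (if b = f x then f x else f b) := hab
        by_cases h1 : a = f x <;> by_cases h2 : b = f x
        · rw [h1, h2]
        · rw [if_pos h1, if_neg h2] at hab'
          have hbE : b ∈ W.erase x := (mem_insert.1 (mem_coe.1 hb)).resolve_left h2
          exact absurd (hinj hxW (mem_of_mem_erase hbE) hab')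
            (Ne.symm (ne_of_mem_erase hbE))
        · rw [if_neg h1, if_pos h2] at hab'
          have haE : a ∈ W.erase x := (mem_insert.1 (mem_coe.1 ha)).resolve_left h1
          exact absurd (hinj (mem_of_mem_erase haE) hxW hab')
            (ne_of_mem_erase haE)
        · rw [if_neg h1, if_neg h2] at hab'
          have haE : a ∈ W.erase x := (mem_insert.1 (mem_coe.1 ha)).resolve_left h1
          have hbE : b ∈ W.erase x := (mem_insert.1 (mem_coe.1 hb)).resolve_left h2
          exact hinj (mem_of_mem_erase haE) (mem_of_mem_erase hbE) hab'
      · intro z hz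
        show (if z = f x then f x else f z) ∈ S
        rcases mem_insert.1 hz with rfl | hz
        · rw [if_pos rfl]; exact hmem x hxW
        · rw [if_neg (fun h : z = f x => hfxnW (by rw [← h]; exact mem_of_mem_erase hz))]
          exact hmem z (mem_of_mem_erase hz)
      · intro z hz
        show (if z = f x then f x else f z) ≤ z
        rcases mem_insert.1 hz with rfl | hz
        · rw [if_pos rfl]
        · rw [if_neg (fun h : z = f x => hfxnW (by rw [← h]; exact mem_of_mem_erase hz))]
          exact hle z (mem_of_mem_erase hz)

/-- The interval coalition consisting of players `e+1-j, …, e`. -/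
def itv (n : ℕ) (e j : ℕ) : Finset (Fin n) :=
  univ.filter (fun x => (x : ℕ) ≤ e ∧ e < (x : ℕ) + j)

/-- `Pred v i j` : there is a winning interval of length `j` whose weakest
player is at least as weak as `i`. -/
def Pred (i j : ℕ) : Prop := ∃ e : ℕ, i ≤ e ∧ e < n ∧ v (itv n e j) = 1

/-- `sval v i` : minimal length of such a winning interval. -/
noncomputable def sval (i : ℕ) : ℕ := sInf {j | Pred v i j}

lemma pred_n (hfull : v univ = 1) {i : ℕ} (hi : i < n) : Pred v i n := by
  refine ⟨n - 1, by omega, by omega, ?_⟩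
  have h : itv n (n - 1) n = univ := by
    ext x
    have hx := x.isLt
    simp only [itv, mem_filter, mem_univ, true_and, iff_true]
    omega
  rw [h]; exact hfull

lemma sval_pred (hfull : v univ = 1) {i : ℕ} (hi : i < n) :
    Pred v i (sval v i) :=
  Nat.sInf_mem (s := {j | Pred v i j}) ⟨n, by exact pred_n v hfull hi⟩

lemma sval_le {i j : ℕ} (h : Pred v i j) :
    sval v i ≤ j := Nat.sInf_le (by exact h)

lemma sval_le_n (hfull : v univ = 1) {i : ℕ} (hi : i < n) :
    sval v i ≤ n := Nat.sInf_le (by exact pred_n v hfull hi)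

lemma sval_pos (hempty : v ∅ = 0) (hfull : v univ = 1) {i : ℕ} (hi : i < n) :
    1 ≤ sval v i := by
  rcases Nat.eq_zero_or_pos (sval v i) with h | h
  · exfalso
    have := sval_pred v hfull hi
    rw [h] at this
    obtain ⟨e, -, -, hwin⟩ := this
    have h0 : itv n e 0 = ∅ := by
      ext x
      simp only [itv, mem_filter, mem_univ, true_and, notMem_empty, iff_false, not_and]
      omega
    rw [h0] at hwin
    omega
  · exact h

/-- Monotone enumeration grows at least linearly. -/
lemma embAdd {t : ℕ} (g : Fin t ↪o Fin n) :
    ∀ (k : ℕ) (a b : Fin t), (a : ℕ) + k = (b : ℕ) → (g a : ℕ) + k ≤ (g b : ℕ) := by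
  intro k
  induction k with
  | zero =>
    intro a b h
    have : a = b := Fin.ext (by omega)
    simp [this]
  | succ k ih =>
    intro a b h
    have hb1 : (a : ℕ) + k < t := by have := b.isLt; omega
    have h1 := ih a ⟨(a : ℕ) + k, hb1⟩ rfl
    have h2 : g ⟨(a : ℕ) + k, hb1⟩ < g b := by
      apply g.strictMono
      rw [Fin.lt_def]
      simp
      omega
    rw [Fin.lt_def] at h2
    omega



/-- Some member of a winning coalition `W` has `sval` at most `W.card`. -/
lemma winMin (hv01 : ∀ S, v S = 0 ∨ v S = 1)
    (hmono : ∀ S T : Finset (Fin n), S ⊆ T → v S ≤ v T)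
    (hempty : v ∅ = 0)
    (hcomplete : ∀ i j : Fin n, i ≤ j → ∀ S : Finset (Fin n), i ∉ S → j ∉ S →
      v (insert j S) ≤ v (insert i S))
    {W : Finset (Fin n)} (hW : v W = 1) :
    ∃ i ∈ W, sval v (i : ℕ) ≤ W.card := by
  have hWne : W.Nonempty := by
    rcases W.eq_empty_or_nonempty with rfl | h
    · rw [hempty] at hW; omega
    · exact h
  have htpos : 0 < W.card := card_pos.2 hWne
  set g := W.orderEmbOfFin rfl with hg
  set w0 : ℕ := ((g ⟨0, htpos⟩ : Fin n) : ℕ) with hw0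
  refine ⟨g ⟨0, htpos⟩, W.orderEmbOfFin_mem rfl ⟨0, htpos⟩, ?_⟩
  have htn : W.card ≤ n := by
    have h1 := card_le_univ W
    simpa using h1
  have hw0n : w0 < n := (g ⟨0, htpos⟩).isLt
  set e := max w0 (W.card - 1) with he
  have hen : e < n := by
    rw [he]; exact max_lt hw0n (by omega)
  have het : W.card ≤ e + 1 := by
    have h1 := le_max_right w0 (W.card - 1); omega
  have hew : e + 1 ≤ w0 + W.card := by
    have h1 := max_le (show w0 ≤ w0 + W.card - 1 by omega)
      (show W.card - 1 ≤ w0 + W.card - 1 by omega)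
    rw [← he] at h1
    omega
  set b := e + 1 - W.card with hb
  have hbt : b + W.card = e + 1 := by omega
  have hbw0 : b ≤ w0 := by omega
  -- index of an element
  have hgl : ∀ (x : Fin n) (hx : x ∈ W),
      (g ((W.orderIsoOfFin rfl).symm ⟨x, hx⟩) : Fin n) = x := by
    intro x hx
    have h1 := W.coe_orderIsoOfFin_apply rfl ((W.orderIsoOfFin rfl).symm ⟨x, hx⟩)
    rw [OrderIso.apply_symm_apply] at h1
    exact h1.symm
  have hlin : ∀ l : Fin W.card, w0 + (l : ℕ) ≤ (g l : ℕ) := by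
    intro l
    exact embAdd g (l : ℕ) ⟨0, htpos⟩ l (by simp)
  have hpf : ∀ (x : Fin n) (hx : x ∈ W),
      b + (((W.orderIsoOfFin rfl).symm ⟨x, hx⟩ : Fin W.card) : ℕ) < n := by
    intro x hx
    have h1 := ((W.orderIsoOfFin rfl).symm ⟨x, hx⟩).isLt
    omega
  have hIwin : v (itv n e W.card) = 1 := by
    apply dom v hv01 hmono hcomplete (∑ x ∈ W, (x : ℕ)) W (itv n e W.card)
      (fun x => if hx : x ∈ W then
        (⟨b + (((W.orderIsoOfFin rfl).symm ⟨x, hx⟩ : Fin W.card) : ℕ), hpf x hx⟩ : Fin n)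
        else x) le_rfl hW ?_ ?_ ?_
    · -- InjOn
      intro a ha' b' hb' hab
      have haW : a ∈ W := mem_coe.1 ha'
      have hbW : b' ∈ W := mem_coe.1 hb'
      simp only [dif_pos haW, dif_pos hbW, Fin.mk.injEq] at hab
      have h2 : ((W.orderIsoOfFin rfl).symm ⟨a, haW⟩ : Fin W.card)
          = (W.orderIsoOfFin rfl).symm ⟨b', hbW⟩ := Fin.ext (by omega)
      have h3 : (⟨a, haW⟩ : {x // x ∈ W}) = ⟨b', hbW⟩ := by
        have := congrArg (W.orderIsoOfFin rfl) h2
        rwa [OrderIso.apply_symm_apply, OrderIso.apply_symm_apply] at this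
      exact congrArg Subtype.val h3
    · -- maps into interval
      intro x hx
      show (if hx' : x ∈ W then _ else x) ∈ itv n e W.card
      rw [dif_pos hx]
      have h1 := ((W.orderIsoOfFin rfl).symm ⟨x, hx⟩).isLt
      simp only [itv, mem_filter, mem_univ, true_and]
      constructor
      · omega
      · omega
    · -- decreases
      intro x hx
      show (if hx' : x ∈ W then _ else x) ≤ x
      rw [dif_pos hx]
      have h1 := hlin ((W.orderIsoOfFin rfl).symm ⟨x, hx⟩)
      rw [hgl x hx] at h1
      rw [Fin.le_def]
      simp only []
      omega
  exact sval_le v ⟨e, le_max_left _ _, hen, hIwin⟩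

/-- A losing coalition `L` has fewer than `sval (max L)` members. -/
lemma loseMax (hv01 : ∀ S, v S = 0 ∨ v S = 1)
    (hmono : ∀ S T : Finset (Fin n), S ⊆ T → v S ≤ v T)
    (hempty : v ∅ = 0) (hfull : v univ = 1)
    (hcomplete : ∀ i j : Fin n, i ≤ j → ∀ S : Finset (Fin n), i ∉ S → j ∉ S →
      v (insert j S) ≤ v (insert i S))
    {L : Finset (Fin n)} (hL : v L = 0)
    {i : Fin n} (hiL : i ∈ L) (hmax : ∀ x ∈ L, x ≤ i) :
    L.card < sval v (i : ℕ) := by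
  by_contra hcon
  push_neg at hcon
  obtain ⟨e, hie, hen, hwin⟩ := sval_pred v hfull i.isLt
  have hj1 : 1 ≤ sval v (i : ℕ) := sval_pos v hempty hfull i.isLt
  have hrpos : 0 < L.card := card_pos.2 ⟨i, hiL⟩
  set g := L.orderEmbOfFin rfl with hg
  have hgmax : ∀ l : Fin L.card, (g l : ℕ) ≤ e := by
    intro l
    have h1 : g l ≤ i := hmax _ (L.orderEmbOfFin_mem rfl l)
    have h2 : (g l : ℕ) ≤ (i : ℕ) := h1
    omega
  have hpf : ∀ d : ℕ, L.card - 1 - d < L.card := by intro d; omega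
  have h1 : v L = 1 := by
    apply dom v hv01 hmono hcomplete (∑ x ∈ itv n e (sval v (i:ℕ)), (x : ℕ))
      (itv n e (sval v (i:ℕ))) L
      (fun x => if hx : x ∈ itv n e (sval v (i:ℕ)) then
        g ⟨L.card - 1 - (e - (x : ℕ)), hpf _⟩ else x) le_rfl hwin ?_ ?_ ?_
    · -- InjOn
      intro a ha' b' hb' hab
      have haI : a ∈ itv n e (sval v (i:ℕ)) := mem_coe.1 ha'
      have hbI : b' ∈ itv n e (sval v (i:ℕ)) := mem_coe.1 hb'
      simp only [dif_pos haI, dif_pos hbI] at hab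
      have hinj := g.injective hab
      have h2 : L.card - 1 - (e - (a:ℕ)) = L.card - 1 - (e - (b':ℕ)) :=
        congrArg Fin.val hinj
      simp only [itv, mem_filter, mem_univ, true_and] at haI hbI
      apply Fin.ext
      omega
    · intro x hx
      show (if hx' : x ∈ itv n e (sval v (i:ℕ)) then _ else x) ∈ L
      rw [dif_pos hx]
      exact L.orderEmbOfFin_mem rfl _
    · intro x hx
      show (if hx' : x ∈ itv n e (sval v (i:ℕ)) then _ else x) ≤ x
      rw [dif_pos hx]
      have hxI := hx
      simp only [itv, mem_filter, mem_univ, true_and] at hxI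
      obtain ⟨hxe, hex⟩ := hxI
      have hd : e - (x:ℕ) ≤ L.card - 1 := by omega
      have h3 := embAdd g (e - (x:ℕ)) ⟨L.card - 1 - (e - (x:ℕ)), hpf _⟩
        ⟨L.card - 1, by omega⟩ (by simp; omega)
      have h4 := hgmax ⟨L.card - 1, by omega⟩
      rw [Fin.le_def]
      omega
  omega

/-- Sum of reciprocal `sval` over a losing coalition. -/
lemma loseSum (hv01 : ∀ S, v S = 0 ∨ v S = 1)
    (hmono : ∀ S T : Finset (Fin n), S ⊆ T → v S ≤ v T)
    (hempty : v ∅ = 0) (hfull : v univ = 1)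
    (hcomplete : ∀ i j : Fin n, i ≤ j → ∀ S : Finset (Fin n), i ∉ S → j ∉ S →
      v (insert j S) ≤ v (insert i S)) :
    ∀ L : Finset (Fin n), v L = 0 →
      ∑ i ∈ L, (1 / (sval v (i : ℕ) : ℝ)) ≤
        ∑ k ∈ Finset.range L.card, (1 / ((k : ℝ) + 2)) := by
  intro L
  induction L using Finset.strongInduction with
  | _ L IH =>
    intro hL
    rcases L.eq_empty_or_nonempty with rfl | hne
    · simp
    · have hiL := L.max'_mem hne
      set i := L.max' hne with hi
      have hL' : v (L.erase i) = 0 := by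
        have := hmono _ _ (erase_subset i L); omega
      have hcard : (L.erase i).card = L.card - 1 := card_erase_of_mem hiL
      have hIH := IH (L.erase i) (erase_ssubset hiL) hL'
      rw [hcard] at hIH
      have hkey : L.card < sval v (i : ℕ) :=
        loseMax v hv01 hmono hempty hfull hcomplete hL hiL
          (fun x hx => L.le_max' x hx)
      have hcpos : 0 < L.card := card_pos.2 hne
      have hterm : (1 / (sval v (i : ℕ) : ℝ)) ≤ 1 / ((L.card : ℝ) + 1) := by
        apply one_div_le_one_div_of_le (by positivity)
        have : (L.card + 1 : ℕ) ≤ sval v (i : ℕ) := by omega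
        exact_mod_cast this
      have hsplit : ∑ x ∈ L.erase i, (1 / (sval v (x : ℕ) : ℝ))
          + (1 / (sval v (i : ℕ) : ℝ)) = ∑ x ∈ L, (1 / (sval v (x : ℕ) : ℝ)) :=
        sum_erase_add L _ hiL
      have hrng : ∑ k ∈ Finset.range L.card, (1 / ((k : ℝ) + 2))
          = ∑ k ∈ Finset.range (L.card - 1), (1 / ((k : ℝ) + 2))
            + 1 / ((L.card : ℝ) + 1) := by
        have h1 : L.card = (L.card - 1) + 1 := by omega
        rw [h1, sum_range_succ]
        have h2 : ((L.card - 1 : ℕ) : ℝ) + 2 = (L.card : ℝ) + 1 := by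
          have : ((L.card - 1 : ℕ) : ℝ) = (L.card : ℝ) - 1 := by
            rw [Nat.cast_sub (by omega)]; simp
          rw [this]
          push_cast [← h1]
          ring
        rw [h2]
        push_cast [← h1]
        ring_nf
      rw [hrng, ← hsplit]
      exact add_le_add hIH hterm

/-- Harmonic-type sums are bounded by `log`. -/
lemma sumLog : ∀ m : ℕ, ∑ k ∈ Finset.range m, (1 / ((k : ℝ) + 2)) ≤
    Real.log ((m : ℝ) + 1) := by
  intro m
  induction m with
  | zero => simp
  | succ m ih =>
    rw [sum_range_succ]
    have hpos1 : (0:ℝ) < (m:ℝ) + 1 := by positivity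
    have hpos2 : (0:ℝ) < (m:ℝ) + 2 := by positivity
    have h := Real.log_le_sub_one_of_pos (show (0:ℝ) < ((m:ℝ)+1)/((m:ℝ)+2) by positivity)
    rw [Real.log_div (ne_of_gt hpos1) (ne_of_gt hpos2)] at h
    have h2 : ((m:ℝ)+1)/((m:ℝ)+2) - 1 = -(1/((m:ℝ)+2)) := by
      field_simp
      norm_num
    rw [h2] at h
    have h3 : ((m + 1 : ℕ) : ℝ) + 1 = (m : ℝ) + 2 := by push_cast; ring
    rw [h3]
    linarith

end CompleteGameAux

/-- For every complete simple game with `n` players, the critical threshold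
value satisfies `α ≤ √n · ln n`: there is a feasible payoff vector giving every
winning coalition at least `1` and every losing coalition at most `√n · ln n`. -/
theorem complete_game_alpha_bound (n : ℕ) (v : Finset (Fin n) → ℕ)
    (hv01 : ∀ S, v S = 0 ∨ v S = 1)
    (hmono : ∀ S T : Finset (Fin n), S ⊆ T → v S ≤ v T)
    (hempty : v ∅ = 0) (hfull : v Finset.univ = 1)
    (hcomplete : ∀ i j : Fin n, i ≤ j → ∀ S : Finset (Fin n), i ∉ S → j ∉ S →
      v (insert j S) ≤ v (insert i S)) :
    ∃ p : Fin n → ℝ, (∀ i, 0 ≤ p i) ∧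
      (∀ W : Finset (Fin n), v W = 1 → 1 ≤ ∑ i ∈ W, p i) ∧
      (∀ L : Finset (Fin n), v L = 0 →
        ∑ i ∈ L, p i ≤ Real.sqrt n * Real.log n) := by
  classical
  rcases Nat.eq_zero_or_pos n with hn0 | hn
  · exfalso
    subst hn0
    rw [Finset.univ_eq_empty] at hfull
    omega
  set s : Fin n → ℕ := fun i => CompleteGameAux.sval v (i : ℕ) with hs
  have hspos : ∀ i : Fin n, 0 < s i := fun i =>
    CompleteGameAux.sval_pos v hempty hfull i.isLt
  have hsn : ∀ i : Fin n, s i ≤ n := fun i =>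
    CompleteGameAux.sval_le_n v hfull i.isLt
  have hr1 : (1:ℝ) ≤ Real.sqrt n := by
    rw [show (1:ℝ) = Real.sqrt 1 from (Real.sqrt_one).symm]
    exact Real.sqrt_le_sqrt (by exact_mod_cast hn)
  have hrn : Real.sqrt n * Real.sqrt n = (n : ℝ) := Real.mul_self_sqrt (by positivity)
  have hrpos : (0:ℝ) < Real.sqrt n := lt_of_lt_of_le one_pos hr1
  have hnpos : (0:ℝ) < (n:ℝ) := by exact_mod_cast hn
  have hdivle : ∀ (a b : ℕ), 0 < a → a ≤ b →
      Real.sqrt n / (b : ℝ) ≤ Real.sqrt n / (a : ℝ) := by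
    intro a b ha hab
    have hb : 0 < b := lt_of_lt_of_le ha hab
    rw [div_le_div_iff₀ (by exact_mod_cast hb) (by exact_mod_cast ha)]
    have h1 : (a:ℝ) ≤ (b:ℝ) := by exact_mod_cast hab
    exact mul_le_mul_of_nonneg_left h1 (Real.sqrt_nonneg _)
  refine ⟨fun i => Real.sqrt n / (s i : ℝ), ?_, ?_, ?_⟩
  · intro i
    positivity
  · -- winning coalitions
    intro W hW
    obtain ⟨i₀, hi₀, hile⟩ :=
      CompleteGameAux.winMin v hv01 hmono hempty hcomplete hW
    have htpos : 0 < W.card := Finset.card_pos.2 ⟨i₀, hi₀⟩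
    have htn : W.card ≤ n := by
      have h1 := Finset.card_le_univ W; simpa using h1
    have hA : Real.sqrt n / (W.card : ℝ) ≤ Real.sqrt n / (s i₀ : ℝ) :=
      hdivle (s i₀) W.card (hspos i₀) hile
    have hB : ∀ i ∈ W.erase i₀,
        Real.sqrt n / (n : ℝ) ≤ Real.sqrt n / (s i : ℝ) :=
      fun i _ => hdivle (s i) n (hspos i) (hsn i)
    have hC := Finset.card_nsmul_le_sum (W.erase i₀)
      (fun i => Real.sqrt n / (s i : ℝ)) _ hB
    rw [Finset.card_erase_of_mem hi₀, nsmul_eq_mul] at hC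
    have hsplit : ∑ x ∈ W.erase i₀, (Real.sqrt n / (s x : ℝ))
        + Real.sqrt n / (s i₀ : ℝ) = ∑ x ∈ W, (Real.sqrt n / (s x : ℝ)) :=
      Finset.sum_erase_add W _ hi₀
    have hcast : ((W.card - 1 : ℕ) : ℝ) = (W.card : ℝ) - 1 := by
      rw [Nat.cast_sub (by omega)]; simp
    rw [hcast] at hC
    -- numeric claim
    set t : ℝ := (W.card : ℝ) with ht
    have ht1 : (1:ℝ) ≤ t := by rw [ht]; exact_mod_cast htpos
    have htnR : t ≤ (n:ℝ) := by rw [ht]; exact_mod_cast htn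
    have hnum : (1:ℝ) ≤ Real.sqrt n / t + (t - 1) * (Real.sqrt n / (n : ℝ)) := by
      rcases le_or_gt t (Real.sqrt n) with hcase | hcase
      · have h1 : (1:ℝ) ≤ Real.sqrt n / t := by
          rw [le_div_iff₀ (by linarith)]
          linarith
        have h2 : (0:ℝ) ≤ (t - 1) * (Real.sqrt n / (n : ℝ)) := by
          apply mul_nonneg (by linarith)
          positivity
        linarith
      · have h2 : Real.sqrt n / (n : ℝ) = 1 / Real.sqrt n := by
          rw [div_eq_div_iff (ne_of_gt hnpos) (ne_of_gt hrpos), one_mul]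
          exact hrn
        have h3 : Real.sqrt n / (n : ℝ) ≤ Real.sqrt n / t := by
          rw [div_le_div_iff₀ hnpos (by linarith)]
          exact mul_le_mul_of_nonneg_left htnR (Real.sqrt_nonneg _)
        have h4 : (Real.sqrt n - 1) * (1 / Real.sqrt n)
            ≤ (t - 1) * (Real.sqrt n / (n : ℝ)) := by
          rw [h2]
          apply mul_le_mul_of_nonneg_right (by linarith)
          positivity
        have h5 : (Real.sqrt n - 1) * (1 / Real.sqrt n)
            = 1 - 1 / Real.sqrt n := by
          field_simp
        have h6 : 1 / Real.sqrt n ≤ Real.sqrt n / t := by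
          rw [← h2]; exact h3
        linarith
    calc (1:ℝ) ≤ Real.sqrt n / t + (t - 1) * (Real.sqrt n / (n : ℝ)) := hnum
      _ ≤ Real.sqrt n / (s i₀ : ℝ)
          + ∑ x ∈ W.erase i₀, (Real.sqrt n / (s x : ℝ)) := by
          rw [ht]
          linarith
      _ = ∑ x ∈ W, (Real.sqrt n / (s x : ℝ)) := by rw [← hsplit]; ring
  · -- losing coalitions
    intro L hL
    have hsum := CompleteGameAux.loseSum v hv01 hmono hempty hfull hcomplete L hL
    have hcardlt : L.card < n := by
      have hle : L.card ≤ n := by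
        have h1 := Finset.card_le_univ L; simpa using h1
      rcases lt_or_eq_of_le hle with h | h
      · exact h
      · exfalso
        have : L = Finset.univ := Finset.eq_univ_of_card L (by simpa using h)
        rw [this, hfull] at hL
        omega
    have hlog1 := CompleteGameAux.sumLog L.card
    have hlog2 : Real.log ((L.card : ℝ) + 1) ≤ Real.log (n : ℝ) := by
      apply Real.log_le_log (by positivity)
      have : L.card + 1 ≤ n := hcardlt
      exact_mod_cast this
    have hfin : ∑ i ∈ L, (1 / (s i : ℝ)) ≤ Real.log (n : ℝ) :=
      le_trans hsum (le_trans hlog1 hlog2)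
    calc ∑ i ∈ L, (Real.sqrt n / (s i : ℝ))
        = Real.sqrt n * ∑ i ∈ L, (1 / (s i : ℝ)) := by
          rw [Finset.mul_sum]
          exact Finset.sum_congr rfl (fun i _ => (mul_one_div _ _).symm)
      _ ≤ Real.sqrt n * Real.log n :=
          mul_le_mul_of_nonneg_left hfin (Real.sqrt_nonneg _)
end

section
/- In the setting of the complete simple game bound: with s_1 ≤ s_2 ≤ … ≤ s_k positive integers, the maximum of Σ_{i=1}^k x_i / s_i over nonnegative reals x subject to Σ_{j=1}^i x_j ≤ s_i − 1 for all i = 1,…,k is attained at x_1 = s_1 − 1, x_i = s_i − s_{i−1} for i ≥ 2, and this maximum is at most Σ_{j=2}^{s_k} 1/j ≤ ln(s_k). -/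
open Finset

namespace PrefixLP

variable {k : ℕ}

/-- Extension of `s` to `ℕ`. -/
def S (hk : 0 < k) (s : Fin k → ℕ) : ℕ → ℕ :=
  fun n => if h : n < k then s ⟨n, h⟩ else s ⟨k - 1, Nat.sub_lt hk one_pos⟩

/-- Prefix-boundary sequence. -/
def B (hk : 0 < k) (s : Fin k → ℕ) : ℕ → ℕ :=
  fun n => if n = 0 then 1 else S hk s (n - 1)

variable (hk : 0 < k) (s : Fin k → ℕ)

lemma S_lt (n : ℕ) (h : n < k) : S hk s n = s ⟨n, h⟩ := dif_pos h

lemma S_pos (hpos : ∀ i, 1 ≤ s i) (n : ℕ) : 1 ≤ S hk s n := by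
  unfold S; split <;> exact hpos _

lemma S_mono (hmono : Monotone s) : Monotone (S hk s) := by
  intro a b hab
  unfold S
  split <;> split
  · exact hmono (by simpa [Fin.le_def] using hab)
  · exact hmono (by simp [Fin.le_def]; omega)
  · omega
  · exact le_refl _

lemma B_zero : B hk s 0 = 1 := rfl

lemma B_succ (n : ℕ) : B hk s (n + 1) = S hk s n := by simp [B]

lemma B_le_S (hmono : Monotone s) (hpos : ∀ i, 1 ≤ s i) (n : ℕ) :
    B hk s n ≤ S hk s n := by
  cases n with
  | zero => simpa [B_zero] using S_pos hk s hpos 0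
  | succ n => rw [B_succ]; exact S_mono hk s hmono (Nat.le_succ n)

lemma B_mono (hmono : Monotone s) (hpos : ∀ i, 1 ≤ s i) : Monotone (B hk s) := by
  apply monotone_nat_of_le_succ
  intro n
  rw [B_succ]
  exact B_le_S hk s hmono hpos n




/-- filter sum over Fin to range sum. -/
lemma filter_sum (i : Fin k) (F : Fin k → ℝ) (G : ℕ → ℝ)
    (hFG : ∀ j : Fin k, F j = G j.val) :
    ∑ j ∈ Finset.univ.filter (fun j => j ≤ i), F j
      = ∑ n ∈ Finset.range (i.val + 1), G n := by
  rw [Finset.sum_filter]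
  have h1 : ∀ j : Fin k, (if j ≤ i then F j else 0)
      = (fun n => if n ≤ i.val then G n else 0) j.val := by
    intro j; simp only [Fin.le_def, hFG]
  rw [Finset.sum_congr rfl (fun j _ => h1 j),
    Fin.sum_univ_eq_sum_range (fun n => if n ≤ i.val then G n else 0) k,
    ← Finset.sum_filter]
  congr 1
  ext n
  simp only [mem_filter, mem_range]
  omega

/-- telescoping of consecutive Ioc interval sums. -/
lemma tele (hk : 0 < k) (s : Fin k → ℕ) (hmono : Monotone s) (hpos : ∀ i, 1 ≤ s i)
    (f : ℕ → ℝ) (n : ℕ) :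
    ∑ m ∈ range n, ∑ j ∈ Ioc (B hk s m) (B hk s (m + 1)), f j
      = ∑ j ∈ Ioc (B hk s 0) (B hk s n), f j := by
  induction n with
  | zero => simp
  | succ n ih =>
    rw [Finset.sum_range_succ, ih,
      Finset.sum_Ioc_consecutive f (B_mono hk s hmono hpos (Nat.zero_le n))
        (B_mono hk s hmono hpos (Nat.le_succ n))]

noncomputable def gg (s : Fin k → ℕ) : ℕ → ℝ := fun n => if h : n < k then 1 / (s ⟨n, h⟩ : ℝ) else 0

lemma gg_lt (s : Fin k → ℕ) (n : ℕ) (h : n < k) : gg s n = 1 / (s ⟨n, h⟩ : ℝ) := dif_pos h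

lemma gg_of_ge (s : Fin k → ℕ) (n : ℕ) (h : k ≤ n) : gg s n = 0 := dif_neg (by omega)

lemma gg_nonneg (s : Fin k → ℕ) (n : ℕ) : 0 ≤ gg s n := by
  unfold gg; split
  · positivity
  · exact le_refl 0

lemma gg_succ_le (s : Fin k → ℕ) (hmono : Monotone s) (hpos : ∀ i, 1 ≤ s i) (n : ℕ) :
    gg s (n + 1) ≤ gg s n := by
  unfold gg
  split <;> split
  · rename_i h1 h2
    apply one_div_le_one_div_of_le
    · exact_mod_cast hpos _
    · exact_mod_cast hmono (show (⟨n, h2⟩ : Fin k) ≤ (⟨n + 1, h1⟩ : Fin k) from by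
        simp [Fin.le_def])
  · omega
  · positivity
  · exact le_refl 0

lemma abel (s : Fin k → ℕ) (X : ℕ → ℝ) :
    ∑ n ∈ range k, X n * gg s n
      = ∑ n ∈ range k, (∑ m ∈ range (n + 1), X m) * (gg s n - gg s (n + 1)) := by
  have h1 : ∀ n ∈ range k, (∑ m ∈ range (n + 1), X m) * (gg s n - gg s (n + 1))
      = ∑ m ∈ range k, (if m ≤ n then X m * (gg s n - gg s (n + 1)) else 0) := by
    intro n hn
    rw [Finset.sum_mul, ← Finset.sum_filter]
    congr 1
    ext m
    simp only [mem_filter, mem_range, mem_range] at *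
    omega
  rw [Finset.sum_congr rfl h1, Finset.sum_comm]
  refine Finset.sum_congr rfl (fun m hm => ?_)
  rw [← Finset.sum_filter]
  have h2 : (range k).filter (fun n => m ≤ n) = Ico m k := by
    ext n; simp only [mem_filter, mem_range, mem_Ico]; omega
  rw [h2, ← Finset.mul_sum,
    Finset.sum_Ico_eq_sub _ (le_of_lt (mem_range.mp hm)),
    Finset.sum_range_sub' (gg s), Finset.sum_range_sub' (gg s),
    gg_of_ge s k le_rfl]
  ring

noncomputable def ext (x : Fin k → ℝ) : ℕ → ℝ := fun n => if h : n < k then x ⟨n, h⟩ else 0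

lemma ext_val (x : Fin k → ℝ) (i : Fin k) : ext x i.val = x i := by
  simp [ext]

lemma val_eq (s : Fin k → ℕ) (x : Fin k → ℝ) :
    ∑ i, x i / (s i : ℝ) = ∑ n ∈ range k, ext x n * gg s n := by
  rw [← Fin.sum_univ_eq_sum_range (fun n => ext x n * gg s n) k]
  refine Finset.sum_congr rfl fun i _ => ?_
  rw [ext_val, gg_lt s i.val i.isLt, Fin.eta, div_eq_mul_one_div]

end PrefixLP

open PrefixLP Finset

/-- With positive integers `s_1 ≤ … ≤ s_k`, the maximum of `Σ x_i / s_i` over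
`x ≥ 0` with prefix constraints `Σ_{j ≤ i} x_j ≤ s_i - 1` is attained at
`x_1 = s_1 - 1`, `x_i = s_i - s_{i-1}` (`i ≥ 2`), and this maximum is at most
`Σ_{j=2}^{s_k} 1/j ≤ ln (s_k)`. -/
theorem prefix_lp_max (k : ℕ) (hk : 0 < k) (s : Fin k → ℕ)
    (hmono : Monotone s) (hpos : ∀ i, 1 ≤ s i) :
    let xstar : Fin k → ℝ := fun i =>
      if hi : i.val = 0 then (s i : ℝ) - 1
      else (s i : ℝ) - (s ⟨i.val - 1, Nat.lt_of_le_of_lt (Nat.sub_le _ _) i.isLt⟩ : ℝ)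
    let last : Fin k := ⟨k - 1, Nat.sub_lt hk one_pos⟩
    ((∀ i, 0 ≤ xstar i) ∧
      (∀ i : Fin k, ∑ j ∈ Finset.univ.filter (fun j => j ≤ i), xstar j ≤ (s i : ℝ) - 1)) ∧
    (∀ x : Fin k → ℝ, (∀ i, 0 ≤ x i) →
      (∀ i : Fin k, ∑ j ∈ Finset.univ.filter (fun j => j ≤ i), x j ≤ (s i : ℝ) - 1) →
      ∑ i, x i / (s i : ℝ) ≤ ∑ i, xstar i / (s i : ℝ)) ∧
    (∑ i, xstar i / (s i : ℝ) ≤ ∑ j ∈ Finset.Icc 2 (s last), (1 : ℝ) / j) ∧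
    (∑ j ∈ Finset.Icc 2 (s last), (1 : ℝ) / j ≤ Real.log (s last)) := by
  intro xstar last
  have hklt : k - 1 < k := Nat.sub_lt hk one_pos
  have hxstar : ∀ i : Fin k, xstar i = (S hk s i.val : ℝ) - (B hk s i.val : ℝ) := by
    intro i
    show (if hi : i.val = 0 then (s i : ℝ) - 1 else _) = _
    by_cases hi : i.val = 0
    · rw [dif_pos hi]
      simp only [S, B, hi, if_pos, dif_pos hk, Nat.cast_one]
      norm_num
      exact congrArg s (Fin.ext hi)
    · rw [dif_neg hi]
      simp [S, B, hi, i.isLt, (by omega : i.val - 1 < k)]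
  have hprefix_star : ∀ i : Fin k,
      ∑ j ∈ Finset.univ.filter (fun j => j ≤ i), xstar j = (s i : ℝ) - 1 := by
    intro i
    rw [filter_sum i xstar (fun n => (B hk s (n + 1) : ℝ) - (B hk s n : ℝ))
      (fun j => by simp only [hxstar, B_succ]),
      Finset.sum_range_sub (fun n => (B hk s n : ℝ)),
      B_succ, B_zero, S_lt hk s i.val i.isLt, Fin.eta]
    norm_num
  refine ⟨⟨?_, ?_⟩, ?_, ?_, ?_⟩
  · intro i
    rw [hxstar]
    have := B_le_S hk s hmono hpos i.val
    have : (B hk s i.val : ℝ) ≤ (S hk s i.val : ℝ) := by exact_mod_cast this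
    linarith
  · intro i
    rw [hprefix_star i]
  · intro x hx0 hxc
    rw [val_eq s x, val_eq s xstar, abel, abel]
    refine Finset.sum_le_sum fun n hn => ?_
    have hn' : n < k := mem_range.mp hn
    have hc : 0 ≤ gg s n - gg s (n + 1) := sub_nonneg.mpr (gg_succ_le s hmono hpos n)
    refine mul_le_mul_of_nonneg_right ?_ hc
    have e1 := filter_sum (⟨n, hn'⟩ : Fin k) x (ext x) (fun j => (ext_val x j).symm)
    have e2 := filter_sum (⟨n, hn'⟩ : Fin k) xstar (ext xstar) (fun j => (ext_val xstar j).symm)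
    have h1 := hxc ⟨n, hn'⟩
    rw [e1] at h1
    have h2 := hprefix_star ⟨n, hn'⟩
    rw [e2] at h2
    exact le_trans h1 (le_of_eq h2.symm)
  · rw [val_eq s xstar]
    have hterm : ∀ n ∈ range k, ext xstar n * gg s n
        ≤ ∑ j ∈ Ioc (B hk s n) (B hk s (n + 1)), (1 : ℝ) / j := by
      intro n hn
      have hn' : n < k := mem_range.mp hn
      rw [B_succ]
      have hx : ext xstar n = (S hk s n : ℝ) - (B hk s n : ℝ) := by
        have h := ext_val xstar ⟨n, hn'⟩
        rw [h, hxstar]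
      have hg : gg s n = 1 / (S hk s n : ℝ) := by
        rw [gg_lt s n hn', S_lt hk s n hn']
      rw [hx, hg]
      have hBS := B_le_S hk s hmono hpos n
      have hS1 := S_pos hk s hpos n
      have hB1 : 1 ≤ B hk s n := by
        have := B_mono hk s hmono hpos (Nat.zero_le n)
        simpa [B_zero] using this
      have key : ∀ j ∈ Ioc (B hk s n) (S hk s n), (1 : ℝ) / (S hk s n : ℝ) ≤ 1 / j := by
        intro j hj
        rw [mem_Ioc] at hj
        apply one_div_le_one_div_of_le
        · have : 0 < j := by omega
          exact_mod_cast this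
        · exact_mod_cast hj.2
      calc ((S hk s n : ℝ) - B hk s n) * (1 / (S hk s n : ℝ))
          = (((S hk s n - B hk s n : ℕ)) : ℝ) * (1 / (S hk s n : ℝ)) := by
            rw [Nat.cast_sub hBS]
        _ = ∑ _j ∈ Ioc (B hk s n) (S hk s n), (1 : ℝ) / (S hk s n : ℝ) := by
            rw [Finset.sum_const, Nat.card_Ioc, nsmul_eq_mul]
        _ ≤ ∑ j ∈ Ioc (B hk s n) (S hk s n), (1 : ℝ) / j := Finset.sum_le_sum key
    calc ∑ n ∈ range k, ext xstar n * gg s n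
        ≤ ∑ n ∈ range k, ∑ j ∈ Ioc (B hk s n) (B hk s (n + 1)), (1 : ℝ) / j :=
          Finset.sum_le_sum hterm
      _ = ∑ j ∈ Ioc (B hk s 0) (B hk s k), (1 : ℝ) / j := tele hk s hmono hpos _ k
      _ = ∑ j ∈ Finset.Icc 2 (s last), (1 : ℝ) / j := by
          have hBk : B hk s k = s last := by
            have hk0 : ¬ k = 0 := by omega
            simp only [B, if_neg hk0, S_lt hk s (k - 1) hklt]; rfl
          rw [B_zero, hBk]
          have hset : Ioc 1 (s last) = Finset.Icc 2 (s last) := by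
            ext j
            simp only [mem_Ioc, Finset.mem_Icc]
            omega
          rw [hset]
  · have h1 := harmonic_le_one_add_log (s last)
    have hN1 : 1 ≤ s last := hpos last
    have key : ∀ N : ℕ, 1 ≤ N →
        (∑ i ∈ range N, ((i : ℝ) + 1)⁻¹) = 1 + ∑ j ∈ Finset.Icc 2 N, (1 : ℝ) / j := by
      intro N hN
      induction N, hN using Nat.le_induction with
      | base => simp
      | succ N hN ih =>
        rw [Finset.sum_range_succ, ih, Finset.sum_Icc_succ_top (by omega : 2 ≤ N + 1)]
        push_cast
        ring
    have h2 : ((harmonic (s last) : ℚ) : ℝ) = 1 + ∑ j ∈ Finset.Icc 2 (s last), (1 : ℝ) / j := by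
      rw [harmonic]
      push_cast
      exact key (s last) hN1
    linarith
end

section
/- A simple game is a weighted voting game (i.e., there exists p ∈ ℝ^n, p ≥ 0, with p(S) ≥ 1 for every winning S and p(S) < 1 for every losing S) if and only if its critical threshold value α is strictly less than 1. -/
/-- A simple game is a weighted voting game (some nonnegative payoff `p`
satisfies `p(S) ≥ 1` exactly for the winning coalitions) if and only if its
critical threshold value `α` is strictly less than `1`. -/
theorem weighted_iff_alpha_lt_one (n : ℕ) (v : Finset (Fin n) → ℕ)
    (hv01 : ∀ S, v S = 0 ∨ v S = 1)
    (hmono : ∀ S T : Finset (Fin n), S ⊆ T → v S ≤ v T)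
    (hempty : v ∅ = 0) (hfull : v Finset.univ = 1) :
    (∃ p : Fin n → ℝ, (∀ i, 0 ≤ p i) ∧
        ∀ S : Finset (Fin n), v S = 1 ↔ 1 ≤ ∑ i ∈ S, p i) ↔
    sInf {a : ℝ | ∃ p : Fin n → ℝ, (∀ i, 0 ≤ p i) ∧
        (∀ W : Finset (Fin n), v W = 1 → 1 ≤ ∑ i ∈ W, p i) ∧
        (∀ L : Finset (Fin n), v L = 0 → ∑ i ∈ L, p i ≤ a)} < 1 := by
  set A : Set ℝ := {a : ℝ | ∃ p : Fin n → ℝ, (∀ i, 0 ≤ p i) ∧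
        (∀ W : Finset (Fin n), v W = 1 → 1 ≤ ∑ i ∈ W, p i) ∧
        (∀ L : Finset (Fin n), v L = 0 → ∑ i ∈ L, p i ≤ a)} with hA
  have hbdd : BddBelow A := by
    refine ⟨0, fun a ha => ?_⟩
    obtain ⟨p, hp0, _, hL⟩ := ha
    have := hL ∅ hempty
    simpa using this
  have hne : A.Nonempty := by
    refine ⟨(n : ℝ), fun i => 1, fun i => zero_le_one, ?_, ?_⟩
    · intro W hW
      by_contra h
      push_neg at h
      have : ∑ i ∈ W, (1 : ℝ) = (W.card : ℝ) := by simp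
      rw [this] at h
      have hc : W.card = 0 := by exact_mod_cast Nat.lt_one_iff.mp (by exact_mod_cast h)
      have : W = ∅ := Finset.card_eq_zero.mp hc
      rw [this, hempty] at hW
      exact absurd hW (by norm_num)
    · intro L _
      have : ∑ i ∈ L, (1 : ℝ) = (L.card : ℝ) := by simp
      rw [this]
      exact_mod_cast Finset.card_le_card (Finset.subset_univ L) |>.trans
        (by simp)
  constructor
  · rintro ⟨p, hp0, hp⟩
    set T : Finset (Finset (Fin n)) :=
      Finset.univ.filter (fun L => v L = 0) with hT
    have hTne : T.Nonempty := ⟨∅, by simp [hT, hempty]⟩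
    set a : ℝ := T.sup' hTne (fun L => ∑ i ∈ L, p i) with ha
    have haA : a ∈ A := by
      refine ⟨p, hp0, fun W hW => (hp W).mp hW, fun L hL => ?_⟩
      exact Finset.le_sup' (fun L => ∑ i ∈ L, p i) (by simp [hT, hL])
    have halt : a < 1 := by
      rw [ha, Finset.sup'_lt_iff]
      intro L hL
      have hL0 : v L = 0 := by simpa [hT] using hL
      by_contra h
      push_neg at h
      have : v L = 1 := (hp L).mpr h
      omega
    exact lt_of_le_of_lt (csInf_le hbdd haA) halt
  · intro hinf
    obtain ⟨a, haA, halt⟩ := exists_lt_of_csInf_lt hne hinf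
    obtain ⟨p, hp0, hW, hL⟩ := haA
    refine ⟨p, hp0, fun S => ?_⟩
    rcases hv01 S with h0 | h1
    · constructor
      · intro h; omega
      · intro h
        have := hL S h0
        linarith
    · exact ⟨fun _ => hW S h1, fun _ => h1⟩
end

section
/- Let G = (N, E) be a graph with independence number k and let G* be the doubled graph from the NP-hardness construction. Then the critical threshold value of the graphic simple game on G* equals k/2, i.e., α_{G*} = min over p : N* → ℝ≥0 with p_u + p_v ≥ 1 for all uv ∈ E* of max over independent sets L* of G* of p(L*) = k/2. -/
/-- The doubled graph `G*` on two disjoint copies of the vertex set of `G`: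
within each copy the edges of `G`, and `i'j''` between the copies iff `i = j`
or `ij ∈ E(G)`. -/
def doubledGraph {V : Type*} (G : SimpleGraph V) : SimpleGraph (V ⊕ V) where
  Adj u w := match u, w with
    | .inl i, .inl j => G.Adj i j
    | .inr i, .inr j => G.Adj i j
    | .inl i, .inr j => i = j ∨ G.Adj i j
    | .inr i, .inl j => i = j ∨ G.Adj i j
  symm := by
    constructor
    rintro (i | i) (j | j) h
    · exact G.symm.symm _ _ h
    · exact h.imp Eq.symm fun ha => G.symm.symm _ _ ha
    · exact h.imp Eq.symm fun ha => G.symm.symm _ _ ha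
    · exact G.symm.symm _ _ h
  loopless := by
    constructor
    rintro (i | i) h
    · exact G.loopless.irrefl i h
    · exact G.loopless.irrefl i h

/-- If `G` has independence number `k`, then the critical threshold value of the
graphic simple game on the doubled graph `G*` equals `k/2`: some feasible payoff
gives every independent set at most `k/2`, and every feasible payoff gives some
independent set at least `k/2`. -/
theorem doubledGraph_alpha_eq {V : Type*} [Fintype V] [DecidableEq V]
    (G : SimpleGraph V) (k : ℕ) (hk1 : 1 ≤ k)
    (hk : IsGreatest {m : ℕ | ∃ S : Finset V,
      (∀ u ∈ S, ∀ w ∈ S, ¬ G.Adj u w) ∧ S.card = m} k) :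
    (∃ p : V ⊕ V → ℝ, (∀ u, 0 ≤ p u) ∧
        (∀ u w, (doubledGraph G).Adj u w → 1 ≤ p u + p w) ∧
        (∀ L : Finset (V ⊕ V), (∀ u ∈ L, ∀ w ∈ L, ¬ (doubledGraph G).Adj u w) →
          ∑ u ∈ L, p u ≤ (k : ℝ) / 2)) ∧
    (∀ p : V ⊕ V → ℝ, (∀ u, 0 ≤ p u) →
        (∀ u w, (doubledGraph G).Adj u w → 1 ≤ p u + p w) →
        ∃ L : Finset (V ⊕ V), (∀ u ∈ L, ∀ w ∈ L, ¬ (doubledGraph G).Adj u w) ∧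
          (k : ℝ) / 2 ≤ ∑ u ∈ L, p u) := by

  constructor
  · refine ⟨fun _ => 1/2, fun _ => by norm_num, fun u w _ => by norm_num, ?_⟩
    intro L hL
    have hcard : L.card ≤ k := by
      set A : Finset V := Finset.univ.filter (fun i => Sum.inl i ∈ L) with hA
      set B : Finset V := Finset.univ.filter (fun i => Sum.inr i ∈ L) with hB
      have hAmem : ∀ i, i ∈ A ↔ Sum.inl i ∈ L := by
        intro i; simp [hA]
      have hBmem : ∀ i, i ∈ B ↔ Sum.inr i ∈ L := by
        intro i; simp [hB]
      have hdisj : Disjoint A B := by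
        rw [Finset.disjoint_left]
        intro i hiA hiB
        exact hL _ ((hAmem i).1 hiA) _ ((hBmem i).1 hiB) (Or.inl rfl)
      have hind : ∀ u ∈ A ∪ B, ∀ w ∈ A ∪ B, ¬ G.Adj u w := by
        intro u hu w hw hadj
        rcases Finset.mem_union.1 hu with hu | hu <;>
          rcases Finset.mem_union.1 hw with hw | hw
        · exact hL _ ((hAmem u).1 hu) _ ((hAmem w).1 hw) hadj
        · exact hL _ ((hAmem u).1 hu) _ ((hBmem w).1 hw) (Or.inr hadj)
        · exact hL _ ((hBmem u).1 hu) _ ((hAmem w).1 hw) (Or.inr hadj)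
        · exact hL _ ((hBmem u).1 hu) _ ((hBmem w).1 hw) hadj
      have hABk : (A ∪ B).card ≤ k := hk.2 ⟨A ∪ B, hind, rfl⟩
      have hsub : L ⊆ A.image Sum.inl ∪ B.image Sum.inr := by
        rintro (i | i) hi
        · exact Finset.mem_union_left _ (Finset.mem_image_of_mem _ ((hAmem i).2 hi))
        · exact Finset.mem_union_right _ (Finset.mem_image_of_mem _ ((hBmem i).2 hi))
      calc L.card ≤ (A.image Sum.inl ∪ B.image Sum.inr).card := Finset.card_le_card hsub
        _ ≤ (A.image Sum.inl).card + (B.image Sum.inr).card := Finset.card_union_le _ _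
        _ = A.card + B.card := by
            rw [Finset.card_image_of_injective _ Sum.inl_injective,
              Finset.card_image_of_injective _ Sum.inr_injective]
        _ = (A ∪ B).card := (Finset.card_union_of_disjoint hdisj).symm
        _ ≤ k := hABk
    have : ∑ _u ∈ L, (1:ℝ)/2 = L.card * (1/2) := by
      simp [mul_comm]
    rw [this]
    have : (L.card : ℝ) ≤ k := by exact_mod_cast hcard
    linarith
  · intro p hp0 hpe
    obtain ⟨S, hSind, hScard⟩ := hk.1
    have hsum : (k : ℝ) ≤ ∑ i ∈ S, p (Sum.inl i) + ∑ i ∈ S, p (Sum.inr i) := by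
      have : ∀ i ∈ S, (1:ℝ) ≤ p (Sum.inl i) + p (Sum.inr i) := by
        intro i _
        exact hpe (Sum.inl i) (Sum.inr i) (Or.inl rfl)
      calc (k : ℝ) = ∑ _i ∈ S, (1:ℝ) := by simp [hScard]
        _ ≤ ∑ i ∈ S, (p (Sum.inl i) + p (Sum.inr i)) := Finset.sum_le_sum this
        _ = _ := Finset.sum_add_distrib
    by_cases hcase : (k : ℝ)/2 ≤ ∑ i ∈ S, p (Sum.inl i)
    · refine ⟨S.image Sum.inl, ?_, ?_⟩
      · intro u hu w hw hadj
        obtain ⟨i, hi, rfl⟩ := Finset.mem_image.1 hu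
        obtain ⟨j, hj, rfl⟩ := Finset.mem_image.1 hw
        exact hSind i hi j hj hadj
      · rwa [Finset.sum_image (fun a _ b _ h => Sum.inl_injective h)]
    · refine ⟨S.image Sum.inr, ?_, ?_⟩
      · intro u hu w hw hadj
        obtain ⟨i, hi, rfl⟩ := Finset.mem_image.1 hu
        obtain ⟨j, hj, rfl⟩ := Finset.mem_image.1 hw
        exact hSind i hi j hj hadj
      · rw [Finset.sum_image (fun a _ b _ h => Sum.inr_injective h)]
        push_neg at hcase
        linarith
end

section
/- If a graph G contains k pairwise disjoint edges u₁v₁, …, u_kv_k with no edges of G joining any two of these edges (i.e., an induced matching of size k), then for the graphic simple game on G, α_G ≥ k/2. -/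
/-- If `G` contains an induced matching `u₁v₁, …, u_kv_k` of size `k`, then for
the graphic simple game on `G` every feasible payoff gives some independent set
a value of at least `k/2`; hence `α_G ≥ k/2`. -/
theorem induced_matching_alpha_lower {V : Type*} [Fintype V] [DecidableEq V]
    (G : SimpleGraph V) (k : ℕ) (u v : Fin k → V)
    (hadj : ∀ i, G.Adj (u i) (v i))
    (hinj : Function.Injective (fun x : Fin k ⊕ Fin k => Sum.elim u v x))
    (hind : ∀ i j : Fin k, i ≠ j →
      ¬ G.Adj (u i) (u j) ∧ ¬ G.Adj (u i) (v j) ∧ ¬ G.Adj (v i) (v j)) :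
    ∀ p : V → ℝ, (∀ x, 0 ≤ p x) → (∀ x y, G.Adj x y → 1 ≤ p x + p y) →
      ∃ L : Finset V, (∀ x ∈ L, ∀ y ∈ L, ¬ G.Adj x y) ∧ (k : ℝ) / 2 ≤ ∑ x ∈ L, p x := by
  intro p hp hfeas
  classical
  set w : Fin k → V := fun i => if (1:ℝ)/2 ≤ p (u i) then u i else v i with hw
  have hinj' : ∀ x y : Fin k ⊕ Fin k, Sum.elim u v x = Sum.elim u v y → x = y :=
    fun x y h => hinj h
  have hwval : ∀ i, (1:ℝ)/2 ≤ p (w i) := by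
    intro i
    simp only [hw]
    by_cases h : (1:ℝ)/2 ≤ p (u i)
    · rw [if_pos h]; exact h
    · rw [if_neg h]
      have h1 := hfeas _ _ (hadj i)
      push_neg at h
      linarith
  have hwmem : ∀ i, w i = u i ∨ w i = v i := by
    intro i
    simp only [hw]
    split
    · exact Or.inl rfl
    · exact Or.inr rfl
  have hne : ∀ i j : Fin k, i ≠ j → w i ≠ w j := by
    intro i j hij heq
    rcases hwmem i with h1 | h1 <;> rcases hwmem j with h2 | h2 <;>
      rw [h1, h2] at heq
    · exact hij (Sum.inl.inj (hinj' (Sum.inl i) (Sum.inl j) heq))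
    · exact Sum.inl_ne_inr (hinj' (Sum.inl i) (Sum.inr j) heq)
    · exact Sum.inr_ne_inl (hinj' (Sum.inr i) (Sum.inl j) heq)
    · exact hij (Sum.inr.inj (hinj' (Sum.inr i) (Sum.inr j) heq))
  have hwinj : Function.Injective w := by
    intro i j h; by_contra hij; exact hne i j hij h
  refine ⟨Finset.image w Finset.univ, ?_, ?_⟩
  · intro x hx y hy hxy
    simp only [Finset.mem_image, Finset.mem_univ, true_and] at hx hy
    obtain ⟨i, rfl⟩ := hx
    obtain ⟨j, rfl⟩ := hy
    rcases eq_or_ne i j with rfl | hij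
    · exact G.loopless.irrefl _ hxy
    · obtain ⟨hA, hB, hC⟩ := hind i j hij
      obtain ⟨_, hB', _⟩ := hind j i hij.symm
      rcases hwmem i with h1 | h1 <;> rcases hwmem j with h2 | h2 <;>
        rw [h1, h2] at hxy
      · exact hA hxy
      · exact hB hxy
      · exact hB' hxy.symm
      · exact hC hxy
  · rw [Finset.sum_image (fun a _ b _ h => hwinj h)]
    have : ∑ i : Fin k, (1:ℝ)/2 ≤ ∑ i : Fin k, p (w i) :=
      Finset.sum_le_sum (fun i _ => hwval i)
    simpa [Finset.sum_const, div_eq_mul_inv, mul_comm] using this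
end
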